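/- arXiv:2209.12306 — 2 statements merged into one kernel-verified Lean document; each statement's English description precedes it below -/
import Mathlib

section
/- In the group Dih_∞ × ℤ/2 with elements γ_{k,l,m} = u^k v₁^l v₂^m (k ∈ ℤ, l,m ∈ {0,1}), the square γ_{k,l,m}² equals u^{2k} if l = 0 and equals the identity if l = 1; the set of finite-order elements, up to conjugacy, is represented by {e, v₁, v₂, v₁v₂, uv₁, uv₁v₂}, a set of exactly six conjugacy classes. -/
/-!
In `Dih_∞ = ⟨r i, sr i⟩` a rotation `r i` has finite order only if `i = 0`, and conjugating by
`r j` moves the reflection `sr i` to `sr (i - 2j)`, so every finite-order element is conjugate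
to `1`, `sr 0` or `sr (-1)`. These three are pairwise non-conjugate because the abelianization
`r i ↦ (0, i mod 2)`, `sr i ↦ (1, i mod 2)` separates them. Conjugacy in `Dih_∞ × ℤ/2` is
componentwise and `ℤ/2` is abelian, so the six classes are these three times `ℤ/2`.
-/

open DihedralGroup

/-- The group `Dih_∞ × ℤ/2`, i.e. the frieze group `p2mm`. -/
abbrev P2mm := DihedralGroup 0 × Multiplicative (ZMod 2)

/-- The element `γ_{k,l,m} = u^k v₁^l v₂^m` of `Dih_∞ × ℤ/2`, with `u = (r 1, 1)`,
`v₁ = (sr 0, 1)` and `v₂ = (1, ofAdd 1)`. -/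
def gammaP (k : ℤ) (l : ℕ) (m : ZMod 2) : P2mm :=
  (r (k : ZMod 0) * (sr 0) ^ l, Multiplicative.ofAdd m)

/-- The six representatives `{e, v₁, v₂, v₁v₂, uv₁, uv₁v₂}`. -/
def repsP : Set P2mm :=
  {gammaP 0 0 0, gammaP 0 1 0, gammaP 0 0 1, gammaP 0 1 1, gammaP 1 1 0, gammaP 1 1 1}

theorem Prod.isConj_iff {G H : Type*} [Group G] [Group H] {a c : G} {b d : H} :
    IsConj (a, b) (c, d) ↔ IsConj a c ∧ IsConj b d := by
  simp only [_root_.isConj_iff, Prod.exists, Prod.mk_mul_mk, Prod.inv_mk, Prod.mk.injEq]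
  exact ⟨fun ⟨g, h, hg, hh⟩ => ⟨⟨g, hg⟩, ⟨h, hh⟩⟩, fun ⟨⟨g, hg⟩, ⟨h, hh⟩⟩ => ⟨g, h, hg, hh⟩⟩

namespace DihedralGroup

variable {n : ℕ}

theorem isConj_sr_add_two_mul (i j : ZMod n) : IsConj (sr i) (sr (i + 2 * j)) :=
  isConj_iff.mpr ⟨r (-j), by rw [r_mul_sr, inv_r, sr_mul_r]; ring_nf⟩

theorem eq_zero_of_isOfFinOrder_r {i : ZMod 0} (h : IsOfFinOrder (r i)) : i = 0 := by
  obtain ⟨k, hk, hpow⟩ := h.exists_pow_eq_one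
  rw [r_pow, one_def, r.injEq] at hpow
  exact (mul_eq_zero.mp hpow).resolve_right (Nat.cast_ne_zero.mpr hk.ne')

/-- The abelianization of `DihedralGroup n` for even `n`. -/
def parityChar (hn : 2 ∣ n) : DihedralGroup n →* Multiplicative (ZMod 2 × ZMod 2) where
  toFun
    | r i => .ofAdd (0, ZMod.castHom hn _ i)
    | sr i => .ofAdd (1, ZMod.castHom hn _ i)
  map_one' := by
    show Multiplicative.ofAdd (0, ZMod.castHom hn _ 0) = 1
    simp
  map_mul' := by
    rintro (i | i) (j | j) <;>
      simp only [r_mul_r, r_mul_sr, sr_mul_r, sr_mul_sr, ← ofAdd_add, Prod.mk_add_mk, map_add,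
        map_sub, CharTwo.sub_eq_add, zero_add, CharTwo.add_self_eq_zero, add_comm]

@[simp] theorem parityChar_r (hn : 2 ∣ n) (i : ZMod n) :
    parityChar hn (r i) = .ofAdd (0, ZMod.castHom hn _ i) := rfl

@[simp] theorem parityChar_sr (hn : 2 ∣ n) (i : ZMod n) :
    parityChar hn (sr i) = .ofAdd (1, ZMod.castHom hn _ i) := rfl

def infTorsionReps : Set (DihedralGroup 0) := {1, sr 0, sr (-1)}

theorem exists_mem_infTorsionReps_isConj {d : DihedralGroup 0} (hd : IsOfFinOrder d) :
    ∃ a ∈ infTorsionReps, IsConj a d := by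
  rcases d with i | i
  · refine ⟨1, by simp [infTorsionReps], ?_⟩
    rw [eq_zero_of_isOfFinOrder_r hd, r_zero]
  · obtain ⟨j, rfl | rfl⟩ : ∃ j : ZMod 0, i = 2 * j ∨ i = 2 * j + 1 := Int.even_or_odd' i
    · refine ⟨sr 0, by simp [infTorsionReps], ?_⟩
      simpa using isConj_sr_add_two_mul 0 j
    · refine ⟨sr (-1), by simp [infTorsionReps], ?_⟩
      convert isConj_sr_add_two_mul (-1) (j + 1) using 2
      ring

theorem eq_of_isConj_of_mem_infTorsionReps {a b : DihedralGroup 0}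
    (ha : a ∈ infTorsionReps) (hb : b ∈ infTorsionReps) (h : IsConj a b) : a = b := by
  have hab := isConj_iff_eq.mp ((parityChar (dvd_zero 2)).map_isConj h)
  simp only [infTorsionReps, Set.mem_insert_iff, Set.mem_singleton_iff] at ha hb
  rcases ha with rfl | rfl | rfl <;> rcases hb with rfl | rfl | rfl <;> simp [← r_zero] at hab ⊢

theorem ncard_infTorsionReps : infTorsionReps.ncard = 3 := by
  rw [infTorsionReps, Set.ncard_insert_of_notMem, Set.ncard_pair] <;> simp [← r_zero]

end DihedralGroup

-- `(k : ZMod 0)` in `gammaP` elaborates to `k : ℤ` with no cast, since `ZMod 0` unfolds to `ℤ`;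
-- the explicit `Int.cast` puts the rotation index back into `ZMod 0`, where the lemmas apply.
theorem gammaP_zero (k : ℤ) (m : ZMod 2) :
    gammaP k 0 m = (r (Int.cast k : ZMod 0), .ofAdd m) := by
  show (r (Int.cast k : ZMod 0) * sr 0 ^ 0, _) = _
  rw [pow_zero, mul_one]

theorem gammaP_one (k : ℤ) (m : ZMod 2) :
    gammaP k 1 m = (sr (-Int.cast k : ZMod 0), .ofAdd m) := by
  show (r (Int.cast k : ZMod 0) * sr 0 ^ 1, _) = _
  rw [pow_one, r_mul_sr, zero_sub]

theorem gammaP_zero_sq (k : ℤ) (m : ZMod 2) : gammaP k 0 m ^ 2 = gammaP (2 * k) 0 0 := by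
  rw [gammaP_zero, gammaP_zero, sq, Prod.mk_mul_mk, r_mul_r, ← ofAdd_add,
    CharTwo.add_self_eq_zero (R := ZMod 2), ← two_mul, Int.cast_mul, Int.cast_two]

theorem gammaP_one_sq (k : ℤ) (m : ZMod 2) : gammaP k 1 m ^ 2 = 1 := by
  rw [gammaP_one, sq, Prod.mk_mul_mk, sr_mul_self, ← ofAdd_add, CharTwo.add_self_eq_zero]
  rfl

theorem repsP_eq : repsP = infTorsionReps ×ˢ Set.univ := by
  ext ⟨d, z⟩
  induction z using Multiplicative.rec with | ofAdd m => ?_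
  obtain rfl | rfl : m = 0 ∨ m = 1 := by revert m; decide
  all_goals simp [repsP, gammaP_zero, gammaP_one, infTorsionReps, r_zero, -ofAdd_zero]

/-- In `Dih_∞ × ℤ/2`, the square of `γ_{k,l,m}` equals `u^{2k}` if `l = 0` and the
identity if `l = 1`; the finite-order elements are, up to conjugacy, represented
by `{e, v₁, v₂, v₁v₂, uv₁, uv₁v₂}`, a set of exactly six conjugacy classes. -/
theorem p2mm_squares_and_conjugacy_classes :
    (∀ (k : ℤ) (m : ZMod 2), (gammaP k 0 m) ^ 2 = gammaP (2 * k) 0 0) ∧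
    (∀ (k : ℤ) (m : ZMod 2), (gammaP k 1 m) ^ 2 = 1) ∧
    (∀ x : P2mm, IsOfFinOrder x → ∃ y ∈ repsP, IsConj y x) ∧
    (∀ y ∈ repsP, ∀ z ∈ repsP, IsConj y z → y = z) ∧
    repsP.ncard = 6 := by
  refine ⟨gammaP_zero_sq, gammaP_one_sq, ?_, ?_, ?_⟩
  · rintro ⟨d, z⟩ hx
    obtain ⟨a, ha, had⟩ := exists_mem_infTorsionReps_isConj ((MonoidHom.fst _ _).isOfFinOrder hx)
    exact ⟨(a, z), repsP_eq ▸ ⟨ha, trivial⟩, Prod.isConj_iff.mpr ⟨had, .refl z⟩⟩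
  · rw [repsP_eq]
    rintro ⟨a, z⟩ ⟨ha, -⟩ ⟨b, w⟩ ⟨hb, -⟩ h
    rw [Prod.isConj_iff, isConj_iff_eq] at h
    exact Prod.ext (eq_of_isConj_of_mem_infTorsionReps ha hb h.1) h.2
  · simp [repsP_eq, Set.ncard_prod, ncard_infTorsionReps]
end

section
/- In the group Dih_∞ × ℤ/2 (frieze group p2mm), the centralizer of v₁ v₂^m (m ∈ {0,1}) is the Klein four-group {e, v₁, v₂, v₁v₂}, and the centralizer of u v₁ v₂^m is {e, uv₁, v₂, uv₁v₂}. -/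
/-! Both `v₁ v₂^m` and `u v₁ v₂^m` are (reflection, central element) pairs. The centralizer of a
pair in a product with an abelian factor is the centralizer of the first coordinate times the
whole abelian factor, and in `Dih_∞` a reflection `sr i` commutes with `r j` iff `2j = 0` and
with `sr j` iff `2(i - j) = 0`; as `ℤ` has no `2`-torsion its centralizer is `{1, sr i}`. -/

open DihedralGroup

namespace DihedralGroup

variable {n : ℕ}

theorem commute_r_sr_iff (i j : ZMod n) : Commute (r j) (sr i) ↔ j + j = 0 := by
  rw [Commute, SemiconjBy, r_mul_sr, sr_mul_r, sr.injEq]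
  constructor <;> intro h <;> linear_combination (exp := 1) -h

theorem commute_sr_sr_iff (i j : ZMod n) :
    Commute (sr j) (sr i) ↔ (i - j) + (i - j) = 0 := by
  rw [Commute, SemiconjBy, sr_mul_sr, sr_mul_sr, r.injEq]
  constructor <;> intro h <;> linear_combination h

theorem centralizer_sr (h : ∀ x : ZMod n, x + x = 0 → x = 0) (i : ZMod n) :
    Set.centralizer {sr i} = {1, sr i} := by
  ext g
  simp only [Set.mem_centralizer_iff, Set.mem_singleton_iff, forall_eq, ← commute_iff_eq,
    Commute.symm_iff, Set.mem_insert_iff, ← r_zero]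
  rcases g with j | j
  · simp only [commute_r_sr_iff, r.injEq, reduceCtorEq, or_false]
    exact ⟨h j, by rintro rfl; simp⟩
  · simp only [commute_sr_sr_iff, sr.injEq, reduceCtorEq, false_or]
    exact ⟨fun hij => (sub_eq_zero.mp (h _ hij)).symm, by rintro rfl; simp⟩

end DihedralGroup

theorem Set.centralizer_singleton_prod_mk {M N : Type*} [Monoid M] [CommMonoid N]
    (a : M) (b : N) : Set.centralizer {(a, b)} = Set.centralizer {a} ×ˢ Set.univ := by
  rw [← Set.singleton_prod_singleton,
    Set.centralizer_prod (Set.singleton_nonempty a) (Set.singleton_nonempty b),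
    Set.centralizer_eq_univ]

theorem Set.pair_prod_pair {α β : Type*} (a a' : α) (b b' : β) :
    ({a, a'} : Set α) ×ˢ ({b, b'} : Set β) = {(a, b), (a', b), (a, b'), (a', b')} := by
  ext ⟨x, y⟩
  simp only [Set.mem_prod, Set.mem_insert_iff, Set.mem_singleton_iff, Prod.mk.injEq]
  tauto

theorem Multiplicative.univ_zmod_two :
    (Set.univ : Set (Multiplicative (ZMod 2))) = {1, .ofAdd 1} := by
  ext x
  simp only [Set.mem_univ, Set.mem_insert_iff, Set.mem_singleton_iff, true_iff]
  revert x
  decide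

theorem P2mm.centralizer_sr_ofAdd (i : ZMod 0) (m : ZMod 2) :
    Set.centralizer {((sr i : DihedralGroup 0), Multiplicative.ofAdd m)} =
      {(1, 1), (sr i, 1), (1, .ofAdd 1), (sr i, .ofAdd 1)} := by
  rw [Set.centralizer_singleton_prod_mk, centralizer_sr (fun _ => add_self_eq_zero.mp),
    Multiplicative.univ_zmod_two, Set.pair_prod_pair]

theorem gammaP_zero_zero (m : ZMod 2) : gammaP 0 0 m = (1, .ofAdd m) := rfl

theorem gammaP_zero_one (m : ZMod 2) : gammaP 0 1 m = (sr 0, .ofAdd m) := rfl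

theorem gammaP_one_one (m : ZMod 2) : gammaP 1 1 m = (sr (-1), .ofAdd m) := rfl

/-- In `Dih_∞ × ℤ/2` (frieze group `p2mm`), the centralizer of `v₁ v₂^m` is the
Klein four-group `{e, v₁, v₂, v₁v₂}`, and the centralizer of `u v₁ v₂^m` is
`{e, uv₁, v₂, uv₁v₂}`. -/
theorem p2mm_centralizers (m : ZMod 2) :
    ((Subgroup.centralizer {gammaP 0 1 m} : Subgroup P2mm) : Set P2mm) =
      {gammaP 0 0 0, gammaP 0 1 0, gammaP 0 0 1, gammaP 0 1 1} ∧
    ((Subgroup.centralizer {gammaP 1 1 m} : Subgroup P2mm) : Set P2mm) =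
      {gammaP 0 0 0, gammaP 1 1 0, gammaP 0 0 1, gammaP 1 1 1} := by
  simp only [gammaP_zero_zero, gammaP_zero_one, gammaP_one_one, ofAdd_zero]
  exact ⟨P2mm.centralizer_sr_ofAdd 0 m, P2mm.centralizer_sr_ofAdd (-1) m⟩
end
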